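/- arXiv:2603.06142 — 3 statements merged into one kernel-verified Lean document; each statement's English description precedes it below -/
import Mathlib

section
/- Let f : ℝ → ℝ be differentiable. The gradient of the PCN energy E_N with respect to a hidden activation a^ℓ_i (for 1 ≤ ℓ < L) equals 2[ε^ℓ_i - Σ_j w^ℓ_{ji} ε^{ℓ+1}_j f'(Σ_m w^ℓ_{jm} a^ℓ_m)], and with respect to a^L_i it equals 2ε^L_i. -/
/-- The predictive coding energy of a PCN. -/
def ENergy (L : ℕ) (n : ℕ → ℕ) (w : ℕ → ℕ → ℕ → ℝ) (f : ℝ → ℝ) (a : ℕ → ℕ → ℝ) : ℝ :=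
  ∑ ℓ ∈ Finset.Icc 1 L, ∑ i ∈ Finset.range (n ℓ),
    (a ℓ i - f (∑ j ∈ Finset.range (n (ℓ - 1)), w (ℓ - 1) i j * a (ℓ - 1) j)) ^ 2

/-! Perturbing the single activation `a^ℓ_i` only moves the two layer terms of the energy that
read layer `ℓ`: the term of layer `ℓ`, where `a^ℓ_i` is the target of the residual `ε^ℓ_i`, and
the term of layer `ℓ + 1`, where `a^ℓ` is the input of every residual `ε^{ℓ+1}_j`. The first
contributes `2 ε^ℓ_i`, the second `-2 Σ_j w^ℓ_{ji} ε^{ℓ+1}_j f'(Σ_m w^ℓ_{jm} a^ℓ_m)` by the chain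
rule; the second is absent when `ℓ = L`. -/

open Finset Function

section Layer

variable {𝕜 : Type*} [NontriviallyNormedField 𝕜]

theorem hasDerivAt_update_apply {ι : Type*} [DecidableEq ι] (x : ι → 𝕜) (i j : ι) (t₀ : 𝕜) :
    HasDerivAt (fun t => update x i t j) (if j = i then 1 else 0) t₀ := by
  by_cases h : j = i
  · subst h
    simpa using hasDerivAt_id' t₀
  · simpa [h] using hasDerivAt_const t₀ (x j)

theorem hasDerivAt_sum_mul_update {ι : Type*} [DecidableEq ι] {s : Finset ι} {i : ι}
    (hi : i ∈ s) (c x : ι → 𝕜) (t₀ : 𝕜) :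
    HasDerivAt (fun t => ∑ j ∈ s, c j * update x i t j) (c i) t₀ := by
  simpa [hi] using HasDerivAt.fun_sum (u := s) fun j _ =>
    (hasDerivAt_update_apply x i j t₀).const_mul (c j)

def layerEnergy (f : 𝕜 → 𝕜) (W : ℕ → ℕ → 𝕜) (m p : ℕ) (y x : ℕ → 𝕜) : 𝕜 :=
  ∑ j ∈ range m, (y j - f (∑ q ∈ range p, W j q * x q)) ^ 2

variable (f : 𝕜 → 𝕜) (W : ℕ → ℕ → 𝕜) {m p : ℕ} (y x : ℕ → 𝕜) {i : ℕ}

theorem hasDerivAt_layerEnergy_update_target (hi : i < m) :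
    HasDerivAt (fun t => layerEnergy f W m p (update y i t) x)
      (2 * (y i - f (∑ q ∈ range p, W i q * x q))) (y i) := by
  have := HasDerivAt.fun_sum (u := range m) fun j _ =>
    ((hasDerivAt_update_apply y i j (y i)).sub_const (f (∑ q ∈ range p, W j q * x q))).fun_pow 2
  simpa [layerEnergy, hi] using this

theorem hasDerivAt_layerEnergy_update_input (hi : i < p)
    (hf : ∀ j < m, DifferentiableAt 𝕜 f (∑ q ∈ range p, W j q * x q)) :
    HasDerivAt (fun t => layerEnergy f W m p y (update x i t))
      (-(2 * ∑ j ∈ range m, W j i * (y j - f (∑ q ∈ range p, W j q * x q)) *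
        deriv f (∑ q ∈ range p, W j q * x q))) (x i) := by
  have hterm : ∀ j ∈ range m,
      HasDerivAt (fun t => (y j - f (∑ q ∈ range p, W j q * update x i t q)) ^ 2)
      (-(2 * (W j i * (y j - f (∑ q ∈ range p, W j q * x q)) *
        deriv f (∑ q ∈ range p, W j q * x q)))) (x i) := by
    intro j hj
    have hpre := hasDerivAt_sum_mul_update (mem_range.2 hi) (W j) x (x i)
    have hcomp : HasDerivAt (fun t => f (∑ q ∈ range p, W j q * update x i t q))
        (deriv f (∑ q ∈ range p, W j q * x q) * W j i) (x i) :=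
      (hf j (mem_range.1 hj)).hasDerivAt.comp_of_eq (x i) hpre (by simp)
    refine ((hcomp.const_sub (y j)).fun_pow 2).congr_deriv ?_
    simp only [update_eq_self]
    ring
  simpa [layerEnergy, ← sum_neg_distrib, mul_sum] using HasDerivAt.fun_sum hterm

end Layer

theorem update_update_eq_ite {α β γ : Type*} [DecidableEq α] [DecidableEq β] (a : α → β → γ)
    (ℓ : α) (i : β) (t : γ) :
    update a ℓ (update (a ℓ) i t) = fun k j => if k = ℓ ∧ j = i then t else a k j := by
  ext k j
  by_cases hk : k = ℓ
  · subst hk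
    simp [update_apply]
  · simp [hk]

section Energy

variable {L : ℕ} {n : ℕ → ℕ} {w : ℕ → ℕ → ℕ → ℝ} {f : ℝ → ℝ} {a : ℕ → ℕ → ℝ} {ℓ i : ℕ}

theorem ENergy_eq_sum_layerEnergy :
    ENergy L n w f a =
      ∑ k ∈ Icc 1 L, layerEnergy f (w (k - 1)) (n k) (n (k - 1)) (a k) (a (k - 1)) :=
  rfl

theorem hasDerivAt_ENergy_update (hi : i < n ℓ)
    (hf : ∀ j < n (ℓ + 1), DifferentiableAt ℝ f (∑ q ∈ range (n ℓ), w ℓ j q * a ℓ q)) :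
    HasDerivAt (fun t => ENergy L n w f (update a ℓ (update (a ℓ) i t)))
      ((if ℓ ∈ Icc 1 L then
          2 * (a ℓ i - f (∑ q ∈ range (n (ℓ - 1)), w (ℓ - 1) i q * a (ℓ - 1) q)) else 0) -
        (if ℓ + 1 ∈ Icc 1 L then
          2 * ∑ j ∈ range (n (ℓ + 1)), w ℓ j i *
            (a (ℓ + 1) j - f (∑ q ∈ range (n ℓ), w ℓ j q * a ℓ q)) *
            deriv f (∑ q ∈ range (n ℓ), w ℓ j q * a ℓ q) else 0))
      (a ℓ i) := by
  set A := 2 * (a ℓ i - f (∑ q ∈ range (n (ℓ - 1)), w (ℓ - 1) i q * a (ℓ - 1) q))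
  set B := 2 * ∑ j ∈ range (n (ℓ + 1)), w ℓ j i *
    (a (ℓ + 1) j - f (∑ q ∈ range (n ℓ), w ℓ j q * a ℓ q)) *
    deriv f (∑ q ∈ range (n ℓ), w ℓ j q * a ℓ q)
  have hlayer : ∀ k ∈ Icc 1 L, HasDerivAt
      (fun t => layerEnergy f (w (k - 1)) (n k) (n (k - 1))
        (update a ℓ (update (a ℓ) i t) k) (update a ℓ (update (a ℓ) i t) (k - 1)))
      ((if k = ℓ then A else 0) - (if k = ℓ + 1 then B else 0)) (a ℓ i) := by
    intro k hk
    have hk0 : k - 1 ≠ k := by grind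
    by_cases hkℓ : k = ℓ
    · subst hkℓ
      simpa [hk0] using hasDerivAt_layerEnergy_update_target f (w (k - 1)) (a k) (a (k - 1)) hi
    by_cases hkℓ' : k = ℓ + 1
    · subst hkℓ'
      simpa [hkℓ] using hasDerivAt_layerEnergy_update_input f (w ℓ) (a (ℓ + 1)) (a ℓ) hi hf
    · have hk1 : k - 1 ≠ ℓ := by grind
      simpa [hkℓ, hkℓ', hk1] using hasDerivAt_const (a ℓ i)
        (layerEnergy f (w (k - 1)) (n k) (n (k - 1)) (a k) (a (k - 1)))
  simpa [ENergy_eq_sum_layerEnergy, sum_sub_distrib] using HasDerivAt.fun_sum hlayer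

end Energy

/-- the partial derivative of E_N with respect to a hidden activation a^ℓ_i
(1 ≤ ℓ < L) is 2[ε^ℓ_i - Σ_j w^ℓ_{ji} ε^{ℓ+1}_j f'(Σ_m w^ℓ_{jm} a^ℓ_m)], and with respect
to an output activation a^L_i it is 2 ε^L_i. -/
theorem pcn_energy_activity_gradient
    (L : ℕ) (n : ℕ → ℕ) (a : ℕ → ℕ → ℝ) (w : ℕ → ℕ → ℕ → ℝ)
    (f : ℝ → ℝ) (hf : Differentiable ℝ f)
    (ε : ℕ → ℕ → ℝ)
    (hε : ∀ ℓ i, 1 ≤ ℓ →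
      ε ℓ i = a ℓ i - f (∑ j ∈ Finset.range (n (ℓ - 1)), w (ℓ - 1) i j * a (ℓ - 1) j)) :
    (∀ ℓ i, 1 ≤ ℓ → ℓ < L → i < n ℓ →
      HasDerivAt
        (fun t : ℝ => ENergy L n w f (fun k j => if k = ℓ ∧ j = i then t else a k j))
        (2 * (ε ℓ i - ∑ j ∈ Finset.range (n (ℓ + 1)),
          w ℓ j i * ε (ℓ + 1) j * deriv f (∑ m ∈ Finset.range (n ℓ), w ℓ j m * a ℓ m)))
        (a ℓ i)) ∧
    (∀ i, 1 ≤ L → i < n L →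
      HasDerivAt
        (fun t : ℝ => ENergy L n w f (fun k j => if k = L ∧ j = i then t else a k j))
        (2 * ε L i) (a L i)) := by
  simp_rw [← update_update_eq_ite]
  refine ⟨fun ℓ i hℓ hℓL hi => ?_, fun i hL hi => ?_⟩
  · have h := hasDerivAt_ENergy_update (L := L) (w := w) (a := a) hi fun j _ => hf _
    rw [if_pos (mem_Icc.2 ⟨hℓ, hℓL.le⟩), if_pos (mem_Icc.2 ⟨by omega, hℓL⟩)] at h
    refine h.congr_deriv ?_
    simp only [hε ℓ i hℓ, hε (ℓ + 1) _ (by omega), add_tsub_cancel_right, mul_sub]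
  · have h := hasDerivAt_ENergy_update (L := L) (w := w) (a := a) hi fun j _ => hf _
    rw [if_pos (mem_Icc.2 ⟨hL, le_rfl⟩), if_neg (by simp), sub_zero] at h
    rwa [hε L i hL]
end

section
/- Under the hierarchical block weight assignment (w̃^{ℓk} = w^{ℓ-1} δ_{k,ℓ-1}) with the input layer clamped to x, the difference E_G - E_N = Σ_i (x_i - f(0))^2 is independent of all free activations a^ℓ (1 ≤ ℓ ≤ L) and of all weights w^ℓ; consequently, a configuration of free activations minimizes E_G if and only if it minimizes E_N, and a configuration of weights minimizes E_G if and only if it minimizes E_N. -/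
/-- Cumulative layer sizes: `S n ℓ` is the number of nodes in layers before layer ℓ. -/
def S (n : ℕ → ℕ) (m : ℕ) : ℕ := ∑ k ∈ Finset.range m, n k

/-- The layer of a global PCG node index α (blocks I_ℓ = [S ℓ, S (ℓ+1))). -/
def lay (L : ℕ) (n : ℕ → ℕ) (α : ℕ) : ℕ := Nat.findGreatest (fun ℓ => S n ℓ ≤ α) L

/-- Assemble the PCG node vector from layered PCN activations. -/
def asm (L : ℕ) (n : ℕ → ℕ) (a : ℕ → ℕ → ℝ) (α : ℕ) : ℝ :=
  a (lay L n α) (α - S n (lay L n α))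

/-- The hierarchical PCG weight matrix built from PCN weights: nonzero only on the
subdiagonal blocks, where block (ℓ, ℓ-1) equals w^{ℓ-1}. -/
def wt (L : ℕ) (n : ℕ → ℕ) (w : ℕ → ℕ → ℕ → ℝ) (α β : ℕ) : ℝ :=
  if lay L n β + 1 = lay L n α then
    w (lay L n β) (α - S n (lay L n α)) (β - S n (lay L n β)) else 0

/-- The PCG energy with the hierarchical weight matrix, as a function of the layered
activations. -/
def EG (L : ℕ) (n : ℕ → ℕ) (f : ℝ → ℝ) (w : ℕ → ℕ → ℕ → ℝ) (a : ℕ → ℕ → ℝ) : ℝ :=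
  ∑ α ∈ Finset.range (S n (L + 1)),
    (asm L n a α - f (∑ β ∈ Finset.range (S n (L + 1)), wt L n w α β * asm L n a β)) ^ 2

lemma S_mono (n : ℕ → ℕ) {m m' : ℕ} (h : m ≤ m') : S n m ≤ S n m' :=
  Finset.sum_le_sum_of_subset (Finset.range_subset_range.2 h)

lemma S_succ (n : ℕ → ℕ) (m : ℕ) : S n (m+1) = S n m + n m :=
  Finset.sum_range_succ _ _

lemma lay_eq (L : ℕ) (n : ℕ → ℕ) {ℓ i : ℕ} (hℓ : ℓ ≤ L) (hi : i < n ℓ) :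
    lay L n (S n ℓ + i) = ℓ := by
  rw [lay, Nat.findGreatest_eq_iff]
  refine ⟨hℓ, fun _ => Nat.le_add_right _ _, fun k hk hkL hS => ?_⟩
  have h1 : S n (ℓ+1) ≤ S n k := S_mono n hk
  have h2 := S_succ n ℓ
  omega

lemma sum_blocks (n : ℕ → ℕ) (M : ℕ) (g : ℕ → ℝ) :
    ∑ α ∈ Finset.range (S n M), g α
      = ∑ ℓ ∈ Finset.range M, ∑ i ∈ Finset.range (n ℓ), g (S n ℓ + i) := by
  induction M with
  | zero => simp [S]
  | succ M ih =>
    rw [Finset.sum_range_succ, ← ih, S_succ, Finset.sum_range_add]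

lemma innerSumHW (L : ℕ) (n : ℕ → ℕ) (w : ℕ → ℕ → ℕ → ℝ) (a : ℕ → ℕ → ℝ)
    {ℓ i : ℕ} (hℓ : ℓ ≤ L) (hi : i < n ℓ) :
    ∑ β ∈ Finset.range (S n (L+1)), wt L n w (S n ℓ + i) β * asm L n a β
      = if 1 ≤ ℓ then ∑ j ∈ Finset.range (n (ℓ-1)), w (ℓ-1) i j * a (ℓ-1) j else 0 := by
  rw [sum_blocks]
  have step : ∀ k ∈ Finset.range (L+1), ∑ j ∈ Finset.range (n k),
      wt L n w (S n ℓ + i) (S n k + j) * asm L n a (S n k + j)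
      = if k + 1 = ℓ then ∑ j ∈ Finset.range (n k), w k i j * a k j else 0 := by
    intro k hk
    rw [Finset.mem_range, Nat.lt_succ_iff] at hk
    split_ifs with h
    · apply Finset.sum_congr rfl
      intro j hj
      rw [Finset.mem_range] at hj
      rw [wt, asm, lay_eq L n hℓ hi, lay_eq L n hk hj]
      simp [h]
    · apply Finset.sum_eq_zero
      intro j hj
      rw [Finset.mem_range] at hj
      rw [wt, lay_eq L n hℓ hi, lay_eq L n hk hj]
      simp [h]
  rw [Finset.sum_congr rfl step]
  by_cases h1 : 1 ≤ ℓ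
  · rw [if_pos h1, Finset.sum_eq_single (ℓ-1)]
    · rw [if_pos (by omega)]
    · intro k hk hne
      rw [if_neg (by omega)]
    · intro hk
      exact absurd (Finset.mem_range.2 (by omega)) hk
  · rw [if_neg h1]
    apply Finset.sum_eq_zero
    intro k hk
    rw [if_neg (by omega)]

lemma EG_eq_EN (L : ℕ) (hL : 1 ≤ L) (n : ℕ → ℕ) (f : ℝ → ℝ) (x : ℕ → ℝ)
    (w : ℕ → ℕ → ℕ → ℝ) (a : ℕ → ℕ → ℝ) (ha : ∀ i, a 0 i = x i) :
    EG L n f w a = ENergy L n w f a + ∑ i ∈ Finset.range (n 0), (x i - f 0) ^ 2 := by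
  rw [EG, sum_blocks]
  have main : ∀ ℓ ∈ Finset.range (L+1), ∑ i ∈ Finset.range (n ℓ),
      (asm L n a (S n ℓ + i)
        - f (∑ β ∈ Finset.range (S n (L+1)), wt L n w (S n ℓ + i) β * asm L n a β)) ^ 2
      = if 1 ≤ ℓ then ∑ i ∈ Finset.range (n ℓ),
          (a ℓ i - f (∑ j ∈ Finset.range (n (ℓ-1)), w (ℓ-1) i j * a (ℓ-1) j)) ^ 2
        else ∑ i ∈ Finset.range (n 0), (x i - f 0) ^ 2 := by
    intro ℓ hℓ
    rw [Finset.mem_range, Nat.lt_succ_iff] at hℓ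
    by_cases h1 : 1 ≤ ℓ
    · rw [if_pos h1]
      apply Finset.sum_congr rfl; intro i hi
      rw [Finset.mem_range] at hi
      rw [asm, lay_eq L n hℓ hi, innerSumHW L n w a hℓ hi, if_pos h1]
      simp
    · rw [if_neg h1]
      have hz : ℓ = 0 := by omega
      subst hz
      apply Finset.sum_congr rfl; intro i hi
      rw [Finset.mem_range] at hi
      rw [asm, lay_eq L n hℓ hi, innerSumHW L n w a hℓ hi, if_neg h1]
      simp [ha i]
  rw [Finset.sum_congr rfl main, Finset.sum_range_succ', if_neg (by omega)]
  congr 1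
  rw [ENergy, show Finset.Icc 1 L = Finset.Ico 1 (L+1) by rw [Finset.Ico_add_one_right_eq_Icc],
    Finset.sum_Ico_eq_sum_range]
  simp only [Nat.add_sub_cancel]
  apply Finset.sum_congr rfl
  intro ℓ _
  rw [if_pos (by omega)]
  simp [Nat.add_comm 1 ℓ]

/-- under the hierarchical block weight assignment with input clamped to x,
E_G - E_N = Σ_i (x_i - f(0))^2 for all free activations and all weights; consequently free
activations minimize E_G iff they minimize E_N, and likewise for weights. -/
theorem pcg_pcn_constant_difference_and_minimizers
    (L : ℕ) (hL : 1 ≤ L) (n : ℕ → ℕ) (hn : ∀ ℓ ≤ L, 0 < n ℓ)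
    (f : ℝ → ℝ) (x : ℕ → ℝ) :
    (∀ (w : ℕ → ℕ → ℕ → ℝ) (a : ℕ → ℕ → ℝ), (∀ i, a 0 i = x i) →
      EG L n f w a = ENergy L n w f a + ∑ i ∈ Finset.range (n 0), (x i - f 0) ^ 2) ∧
    (∀ (w : ℕ → ℕ → ℕ → ℝ) (a : ℕ → ℕ → ℝ), (∀ i, a 0 i = x i) →
      ((∀ b : ℕ → ℕ → ℝ, (∀ i, b 0 i = x i) → EG L n f w a ≤ EG L n f w b) ↔
       (∀ b : ℕ → ℕ → ℝ, (∀ i, b 0 i = x i) → ENergy L n w f a ≤ ENergy L n w f b))) ∧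
    (∀ (w : ℕ → ℕ → ℕ → ℝ) (a : ℕ → ℕ → ℝ), (∀ i, a 0 i = x i) →
      ((∀ w' : ℕ → ℕ → ℕ → ℝ, EG L n f w a ≤ EG L n f w' a) ↔
       (∀ w' : ℕ → ℕ → ℕ → ℝ, ENergy L n w f a ≤ ENergy L n w' f a))) := by
  refine ⟨fun w a ha => EG_eq_EN L hL n f x w a ha, ?_, ?_⟩
  · intro w a ha
    constructor <;> intro h b hb <;>
    · have h1 := EG_eq_EN L hL n f x w a ha
      have h2 := EG_eq_EN L hL n f x w b hb
      have := h b hb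
      linarith
  · intro w a ha
    constructor <;> intro h w' <;>
    · have h1 := EG_eq_EN L hL n f x w a ha
      have h2 := EG_eq_EN L hL n f x w' a ha
      have := h w'
      linarith
end

section
/- For the PCN with output layer unclamped (testing), any critical point of E_N with respect to all free activations (a^1,…,a^L) at which the stationarity system ε^L = 0 and ε^ℓ_i = Σ_j w^ℓ_{ji} ε^{ℓ+1}_j f'(·) holds, satisfies E_N = 0; hence every such critical point is a global minimum. -/
/-- during testing, any critical point of E_N satisfying the stationarity
system (ε^L = 0 and ε^ℓ_i = Σ_j w^ℓ_{ji} ε^{ℓ+1}_j f'(·)) has E_N = 0 and is therefore a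
global minimum. -/
theorem pcn_testing_critical_point_is_global_min
    (L : ℕ) (hL : 1 ≤ L) (n : ℕ → ℕ)
    (w : ℕ → ℕ → ℕ → ℝ) (f : ℝ → ℝ) (hf : Differentiable ℝ f)
    (x : ℕ → ℝ) (a : ℕ → ℕ → ℝ) (ha0 : ∀ i, a 0 i = x i)
    (ε : ℕ → ℕ → ℝ)
    (hε : ∀ ℓ i, 1 ≤ ℓ →
      ε ℓ i = a ℓ i - f (∑ j ∈ Finset.range (n (ℓ - 1)), w (ℓ - 1) i j * a (ℓ - 1) j))
    (hout : ∀ i < n L, ε L i = 0)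
    (hstat : ∀ ℓ, 1 ≤ ℓ → ℓ < L → ∀ i < n ℓ,
      ε ℓ i = ∑ j ∈ Finset.range (n (ℓ + 1)),
        w ℓ j i * ε (ℓ + 1) j * deriv f (∑ m ∈ Finset.range (n ℓ), w ℓ j m * a ℓ m)) :
    ENergy L n w f a = 0 ∧
    ∀ b : ℕ → ℕ → ℝ, (∀ i, b 0 i = x i) → ENergy L n w f a ≤ ENergy L n w f b := by
  have key : ∀ k ℓ, ℓ + k = L → 1 ≤ ℓ → ∀ i < n ℓ, ε ℓ i = 0 := by
    intro k
    induction k with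
    | zero =>
      intro ℓ hℓ _ i hi
      subst hℓ; simpa using hout i hi
    | succ k ih =>
      intro ℓ hℓ h1 i hi
      have hlt : ℓ < L := by omega
      rw [hstat ℓ h1 hlt i hi]
      apply Finset.sum_eq_zero
      intro j hj
      have : ε (ℓ + 1) j = 0 := ih (ℓ + 1) (by omega) (by omega) j (Finset.mem_range.mp hj)
      simp [this]
  have hzero : ENergy L n w f a = 0 := by
    apply Finset.sum_eq_zero
    intro ℓ hℓ
    apply Finset.sum_eq_zero
    intro i hi
    obtain ⟨h1, h2⟩ := Finset.mem_Icc.mp hℓ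
    have := key (L - ℓ) ℓ (by omega) h1 i (Finset.mem_range.mp hi)
    rw [hε ℓ i h1] at this
    simp [this]
  refine ⟨hzero, ?_⟩
  intro b _
  rw [hzero]
  apply Finset.sum_nonneg
  intro ℓ _
  apply Finset.sum_nonneg
  intro i _
  positivity
end
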